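/- arXiv:1912.08181 — 2 statements merged into one kernel-verified Lean document; each statement's English description precedes it below -/
import Mathlib

section
/- Let d ≥ 0, A a finite subset of ℝ^d, s a nonnegative integer, and p a real polynomial in 2d variables of total degree at most 2s+1. Define the quadratic form Φ_p on the space of functions f : A → ℝ by Φ_p(f) = Σ_{a,b ∈ A} p(a,b) f(a) f(b). If Y is a linear subspace of ℝ^A such that Φ_p(f) > 0 for every nonzero f ∈ Y, then dim Y ≤ dim_s(A). -/
open MvPolynomial

/-- `dim_s(A)`: the dimension of the space of functions `A → ℝ` that are restrictions to `A`
of `d`-variate real polynomials of total degree at most `s`. -/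
noncomputable def polyDim (d s : ℕ) (A : Finset (Fin d → ℝ)) : ℕ :=
  Module.finrank ℝ (Submodule.span ℝ
    {f : A → ℝ | ∃ q : MvPolynomial (Fin d) ℝ, q.totalDegree ≤ s ∧
      ∀ a : A, f a = eval (a : Fin d → ℝ) q})


/-!
Write `p = ∑ c_{αβ} x^α y^β` with `|α| + |β| ≤ 2s + 1`. Then
`Φ_p(f) = ∑ c_{αβ} (∑_a f(a) a^α) (∑_b f(b) b^β)`, and in every term `|α| ≤ s` or `|β| ≤ s`,
so `Φ_p(f) = 0` as soon as `f` is orthogonal (for the dot product) to all restrictions to `A`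
of polynomials of degree at most `s`. Thus `Y` meets that orthogonal complement only in `0`,
which bounds `dim Y` by `dim_s(A)`.
-/

open Module Matrix

theorem LinearMap.finrank_le_finrank_of_separating {K E F : Type*} [Field K] [AddCommGroup E]
    [Module K E] [AddCommGroup F] [Module K F] (B : E →ₗ[K] F →ₗ[K] K) {Y : Submodule K E}
    {V : Submodule K F} [FiniteDimensional K V] (h : ∀ y ∈ Y, (∀ v ∈ V, B y v = 0) → y = 0) :
    finrank K Y ≤ finrank K V := by
  let L : Y →ₗ[K] Dual K V := (B.compl₂ V.subtype).comp Y.subtype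
  have hL : Function.Injective L := by
    refine (injective_iff_map_eq_zero L).2 fun y hy => Subtype.ext <| h y y.2 fun v hv => ?_
    exact LinearMap.congr_fun hy ⟨v, hv⟩
  simpa using L.finrank_le_finrank_of_injective hL

namespace MvPolynomial

variable {σ R : Type*} [Fintype σ] [CommSemiring R]

theorem totalDegree_prod_X_pow_le [Nontrivial R] (e : σ → ℕ) :
    (∏ i, X i ^ e i : MvPolynomial σ R).totalDegree ≤ ∑ i, e i :=
  (totalDegree_finsetProd _ _).trans_eq <| by simp only [totalDegree_X_pow]

theorem sum_inl_le_or_sum_inr_le {p : MvPolynomial (σ ⊕ σ) R} {s : ℕ}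
    (hp : p.totalDegree ≤ 2 * s + 1) {m : σ ⊕ σ →₀ ℕ} (hm : m ∈ p.support) :
    ∑ i, m (.inl i) ≤ s ∨ ∑ i, m (.inr i) ≤ s := by
  have hdeg := (le_totalDegree hm).trans hp
  rw [Finsupp.sum_fintype _ _ fun _ => rfl, Fintype.sum_sum_type] at hdeg
  omega

theorem sum_sum_eval_sumElim_mul_mul {α : Type*} [Fintype α] (p : MvPolynomial (σ ⊕ σ) R)
    (x : α → σ → R) (f g : α → R) :
    ∑ a, ∑ b, eval (Sum.elim (x a) (x b)) p * f a * g b =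
      ∑ m ∈ p.support, coeff m p * (f ⬝ᵥ fun a => ∏ i, x a i ^ m (.inl i)) *
        (g ⬝ᵥ fun b => ∏ i, x b i ^ m (.inr i)) := by
  simp_rw [eval_eq', Fintype.prod_sum_type, Sum.elim_inl, Sum.elim_inr, dotProduct,
    Finset.mul_sum, Finset.sum_mul]
  rw [Finset.sum_comm]
  conv_lhs => enter [2, b]; rw [Finset.sum_comm]
  rw [Finset.sum_comm]
  refine Finset.sum_congr rfl fun m _ => Finset.sum_congr rfl fun a _ =>
    Finset.sum_congr rfl fun b _ => by ring

end MvPolynomial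

noncomputable def polyFunctions (d s : ℕ) (A : Finset (Fin d → ℝ)) : Submodule ℝ (A → ℝ) :=
  Submodule.span ℝ {f : A → ℝ | ∃ q : MvPolynomial (Fin d) ℝ, q.totalDegree ≤ s ∧
      ∀ a : A, f a = eval (a : Fin d → ℝ) q}

section

variable {d s : ℕ} {A : Finset (Fin d → ℝ)}

theorem prod_pow_mem_polyFunctions {e : Fin d → ℕ} (he : ∑ i, e i ≤ s) :
    (fun a : A => ∏ i, (a : Fin d → ℝ) i ^ e i) ∈ polyFunctions d s A :=
  Submodule.subset_span ⟨∏ i, X i ^ e i, (totalDegree_prod_X_pow_le e).trans he,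
    fun a => by simp⟩

theorem sum_sum_eval_mul_mul_eq_zero {p : MvPolynomial (Fin d ⊕ Fin d) ℝ}
    (hp : p.totalDegree ≤ 2 * s + 1) {f g : A → ℝ}
    (hf : ∀ u ∈ polyFunctions d s A, f ⬝ᵥ u = 0) (hg : ∀ u ∈ polyFunctions d s A, g ⬝ᵥ u = 0) :
    ∑ a : A, ∑ b : A, eval (Sum.elim (a : Fin d → ℝ) (b : Fin d → ℝ)) p * f a * g b = 0 := by
  rw [sum_sum_eval_sumElim_mul_mul]
  refine Finset.sum_eq_zero fun m hm => ?_
  rcases sum_inl_le_or_sum_inr_le hp hm with h | h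
  · rw [hf _ (prod_pow_mem_polyFunctions h), mul_zero, zero_mul]
  · rw [hg _ (prod_pow_mem_polyFunctions h), mul_zero]

end

/-- If `p` is a real `2d`-variate polynomial of total degree at most `2s+1` and `Y` is a
subspace of `ℝ^A` on which the quadratic form `Φ_p(f) = ∑_{a,b ∈ A} p(a,b) f(a) f(b)` is
positive definite, then `dim Y ≤ dim_s(A)`. -/
theorem finrank_le_polyDim_of_posDef (d s : ℕ) (A : Finset (Fin d → ℝ))
    (p : MvPolynomial (Fin d ⊕ Fin d) ℝ) (hp : p.totalDegree ≤ 2 * s + 1)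
    (Y : Submodule ℝ (A → ℝ))
    (hY : ∀ f ∈ Y, f ≠ 0 →
      0 < ∑ a : A, ∑ b : A,
        eval (Sum.elim (a : Fin d → ℝ) (b : Fin d → ℝ)) p * f a * f b) :
    Module.finrank ℝ Y ≤ polyDim d s A := by
  refine (dotProductBilin ℝ ℝ).finrank_le_finrank_of_separating (V := polyFunctions d s A)
    fun f hfY hf => ?_
  by_contra hf0
  exact (hY f hfY hf0).ne' (sum_sum_eval_mul_mul_eq_zero hp hf hf)
end

section
/- Let d ≥ 0, A a finite subset of ℝ^d, s a nonnegative integer, and p a real polynomial in 2d variables of total degree at most 2s+1. Define the quadratic form Φ_p on ℝ^A by Φ_p(f) = Σ_{a,b ∈ A} p(a,b) f(a) f(b). If Y is a linear subspace of ℝ^A such that Φ_p(f) < 0 for every nonzero f ∈ Y, then dim Y ≤ dim_s(A). -/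
open MvPolynomial

/-- If `p` is a real `2d`-variate polynomial of total degree at most `2s+1` and `Y` is a
subspace of `ℝ^A` on which the quadratic form `Φ_p(f) = ∑_{a,b ∈ A} p(a,b) f(a) f(b)` is
negative definite, then `dim Y ≤ dim_s(A)`. -/
theorem finrank_le_polyDim_of_negDef (d s : ℕ) (A : Finset (Fin d → ℝ))
    (p : MvPolynomial (Fin d ⊕ Fin d) ℝ) (hp : p.totalDegree ≤ 2 * s + 1)
    (Y : Submodule ℝ (A → ℝ))
    (hY : ∀ f ∈ Y, f ≠ 0 →
      (∑ a : A, ∑ b : A,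
        eval (Sum.elim (a : Fin d → ℝ) (b : Fin d → ℝ)) p * f a * f b) < 0) :
    Module.finrank ℝ Y ≤ polyDim d s A := by
  classical
  set S : Set (A → ℝ) := {f : A → ℝ | ∃ q : MvPolynomial (Fin d) ℝ, q.totalDegree ≤ s ∧
      ∀ a : A, f a = eval (a : Fin d → ℝ) q} with hS
  set W : Submodule ℝ (A → ℝ) := Submodule.span ℝ S with hW
  -- bilinear pairing
  let B : (A → ℝ) →ₗ[ℝ] (A → ℝ) →ₗ[ℝ] ℝ :=
    LinearMap.mk₂ ℝ (fun f g => ∑ a : A, f a * g a)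
      (fun f₁ f₂ g => by simp [add_mul, Finset.sum_add_distrib])
      (fun c f g => by simp [Finset.mul_sum, mul_assoc])
      (fun f g₁ g₂ => by simp [mul_add, Finset.sum_add_distrib])
      (fun c f g => by simp [Finset.mul_sum]; ring_nf; simp [mul_comm, mul_left_comm])
  let T : Y →ₗ[ℝ] Module.Dual ℝ W :=
    ((LinearMap.llcomp ℝ W (A → ℝ) ℝ).flip W.subtype) ∘ₗ B ∘ₗ Y.subtype
  have hT : Function.Injective T := by
    rw [← LinearMap.ker_eq_bot, Submodule.eq_bot_iff]
    intro f hf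
    have hker : ∀ g ∈ W, ∑ a : A, (f : A → ℝ) a * g a = 0 := by
      intro g hg
      have := congrFun (congrArg (fun φ : Module.Dual ℝ W => (φ : W → ℝ)) hf) ⟨g, hg⟩
      simpa [T, B] using this
    -- orthogonality against monomials of degree ≤ s
    have hmon : ∀ n : Fin d → ℕ, (∑ i, n i) ≤ s →
        ∑ a : A, (f : A → ℝ) a * ∏ i, (a : Fin d → ℝ) i ^ n i = 0 := by
      intro n hn
      apply hker
      apply Submodule.subset_span
      refine ⟨monomial (Finsupp.equivFunOnFinite.symm n) 1, ?_, ?_⟩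
      · rw [totalDegree_monomial _ (one_ne_zero)]
        rw [Finsupp.sum_fintype _ _ (fun _ => rfl)]
        simpa using hn
      · intro a
        rw [eval_monomial, Finsupp.prod_fintype _ _ (fun _ => pow_zero _)]
        simp
    -- the quadratic form vanishes at f
    have hQ : (∑ a : A, ∑ b : A,
        eval (Sum.elim (a : Fin d → ℝ) (b : Fin d → ℝ)) p * (f : A → ℝ) a * (f : A → ℝ) b) = 0 := by
      have step : (∑ a : A, ∑ b : A,
          eval (Sum.elim (a : Fin d → ℝ) (b : Fin d → ℝ)) p * (f : A → ℝ) a * (f : A → ℝ) b)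
          = ∑ m ∈ p.support, coeff m p *
              (∑ a : A, (f : A → ℝ) a * ∏ i, (a : Fin d → ℝ) i ^ m (Sum.inl i)) *
              (∑ b : A, (f : A → ℝ) b * ∏ i, (b : Fin d → ℝ) i ^ m (Sum.inr i)) := by
        simp only [eval_eq', Fintype.prod_sum_type, Sum.elim_inl, Sum.elim_inr, Finset.sum_mul]
        refine ((Finset.sum_congr rfl fun a _ => Finset.sum_comm).trans Finset.sum_comm).trans ?_
        refine Finset.sum_congr rfl fun m _ => ?_
        rw [mul_assoc, Finset.sum_mul_sum, Finset.mul_sum]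
        refine Finset.sum_congr rfl fun a _ => ?_
        rw [Finset.mul_sum]
        refine Finset.sum_congr rfl fun b _ => ?_
        ring
      rw [step]
      apply Finset.sum_eq_zero
      intro m hm
      have hdeg : (∑ i, m (Sum.inl i)) + (∑ i, m (Sum.inr i)) ≤ 2 * s + 1 := by
        have h1 := MvPolynomial.le_totalDegree hm
        rw [Finsupp.sum_fintype _ _ (fun _ => rfl), Fintype.sum_sum_type] at h1
        omega
      rcases le_or_gt (∑ i, m (Sum.inl i)) s with h | h
      · rw [hmon _ h]; ring
      · have h2 : (∑ i, m (Sum.inr i)) ≤ s := by omega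
        rw [hmon _ h2]; ring
    have : (f : A → ℝ) = 0 := by
      by_contra hne
      have := hY (f : A → ℝ) f.2 hne
      rw [hQ] at this
      exact lt_irrefl 0 this
    exact Subtype.ext this
  have hWfin : FiniteDimensional ℝ W := inferInstance
  calc Module.finrank ℝ Y ≤ Module.finrank ℝ (Module.Dual ℝ W) :=
        LinearMap.finrank_le_finrank_of_injective hT
    _ = Module.finrank ℝ W := Subspace.dual_finrank_eq
    _ = polyDim d s A := rfl
end
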